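/- arXiv:2403.12235 — 2 statements merged into one kernel-verified Lean document; each statement's English description precedes it below -/
import Mathlib

section
/- A real 3×3 matrix R̂ is in SO(3) if and only if there exists a 7×7 positive semidefinite matrix Ŷ of rank 1 such that: Ŷ(7,7) = 1, trace(Ŷ(1:3,1:3)) = trace(Ŷ(4:6,4:6)) = 1, trace(Ŷ(1:3,4:6)) = 0, the first column of R̂ equals Ŷ(1:3,7), the second column equals Ŷ(4:6,7), and the third column equals the vector (Ŷ(2,6)−Ŷ(3,5), Ŷ(3,4)−Ŷ(1,6), Ŷ(1,5)−Ŷ(2,4)). -/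
open Matrix

private lemma outer_mulVec (v x : Fin 7 → ℝ) :
    vecMulVec v v *ᵥ x = (v ⬝ᵥ x) • v := by
  ext i
  simp only [mulVec, dotProduct, vecMulVec_apply, Pi.smul_apply, smul_eq_mul,
    Finset.sum_mul]
  exact Finset.sum_congr rfl fun j _ => by ring

private lemma outer_psd (v : Fin 7 → ℝ) : (vecMulVec v v).PosSemidef := by
  refine Matrix.PosSemidef.of_dotProduct_mulVec_nonneg ?_ ?_
  · ext i j
    simp [conjTranspose_apply, vecMulVec_apply, mul_comm]
  · intro x
    rw [outer_mulVec]
    have hx : star x = x := by ext; simp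
    rw [hx, dotProduct_smul, smul_eq_mul, dotProduct_comm]
    exact mul_self_nonneg _

private lemma outer_rank (v : Fin 7 → ℝ) (hv : v ≠ 0) :
    (vecMulVec v v).rank = 1 := by
  rw [Matrix.rank, finrank_eq_one_iff']
  have hvv : v ⬝ᵥ v ≠ 0 := by
    rwa [ne_eq, dotProduct_self_eq_zero]
  have hmem : v ∈ LinearMap.range (vecMulVec v v).mulVecLin := by
    refine ⟨(v ⬝ᵥ v)⁻¹ • v, ?_⟩
    rw [mulVecLin_apply, outer_mulVec, dotProduct_smul, smul_eq_mul, inv_mul_cancel₀ hvv, one_smul]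
  refine ⟨⟨v, hmem⟩, ?_, ?_⟩
  · simp [Subtype.ext_iff, hv]
  · rintro ⟨w, x, rfl⟩
    exact ⟨v ⬝ᵥ x, Subtype.ext (by simp [mulVecLin_apply, outer_mulVec])⟩

private lemma rank_one_entries {Y : Matrix (Fin 7) (Fin 7) ℝ}
    (hsym : ∀ i j, Y i j = Y j i) (h66 : Y 6 6 = 1) (hr : Y.rank = 1) :
    ∀ i j, Y i j = Y i 6 * Y j 6 := by
  rw [Matrix.rank, finrank_eq_one_iff'] at hr
  obtain ⟨⟨w, hwmem⟩, hw0, hw⟩ := hr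
  have hcol : ∀ j : Fin 7, ∃ c : ℝ, ∀ i, c * w i = Y i j := by
    intro j
    have hmem : (fun i => Y i j) ∈ LinearMap.range Y.mulVecLin := by
      refine ⟨Pi.single j 1, ?_⟩
      rw [mulVecLin_apply, mulVec_single_one]
      ext i; simp
    obtain ⟨c, hc⟩ := hw ⟨_, hmem⟩
    exact ⟨c, fun i => congrFun (congrArg Subtype.val hc) i⟩
  intro i j
  obtain ⟨c6, hc6⟩ := hcol 6
  obtain ⟨cj, hcj⟩ := hcol j
  have e1 : cj * w i = Y i j := hcj i
  have e2 : cj * w 6 = Y 6 j := hcj 6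
  have e3 : c6 * w i = Y i 6 := hc6 i
  have e4 : c6 * w 6 = 1 := by rw [hc6 6, h66]
  calc Y i j = cj * w i := e1.symm
    _ = (cj * w i) * (c6 * w 6) := by rw [e4, mul_one]
    _ = (c6 * w i) * (cj * w 6) := by ring
    _ = Y i 6 * Y 6 j := by rw [e3, e2]
    _ = Y i 6 * Y j 6 := by rw [hsym 6 j]

set_option maxHeartbeats 1000000 in
/-- A real `3 × 3` matrix `R̂` is in `SO(3)` iff there exists a rank-1 PSD
`7 × 7` matrix `Ŷ` with `Ŷ(7,7) = 1`, unit block traces, zero cross-block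
trace, whose last column stores the first two columns of `R̂` and whose
off-diagonal entries recover the third column as a cross product. -/
theorem SO3_iff_exists_rank_one_psd (R : Matrix (Fin 3) (Fin 3) ℝ) :
    (Rᵀ * R = 1 ∧ R.det = 1) ↔
      ∃ Y : Matrix (Fin 7) (Fin 7) ℝ, Y.PosSemidef ∧ Y.rank = 1 ∧
        Y 6 6 = 1 ∧
        Y 0 0 + Y 1 1 + Y 2 2 = 1 ∧
        Y 3 3 + Y 4 4 + Y 5 5 = 1 ∧
        Y 0 3 + Y 1 4 + Y 2 5 = 0 ∧
        R 0 0 = Y 0 6 ∧ R 1 0 = Y 1 6 ∧ R 2 0 = Y 2 6 ∧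
        R 0 1 = Y 3 6 ∧ R 1 1 = Y 4 6 ∧ R 2 1 = Y 5 6 ∧
        R 0 2 = Y 1 5 - Y 2 4 ∧ R 1 2 = Y 2 3 - Y 0 5 ∧
        R 2 2 = Y 0 4 - Y 1 3 := by
  constructor
  · rintro ⟨horth, hdet⟩
    set v : Fin 7 → ℝ := ![R 0 0, R 1 0, R 2 0, R 0 1, R 1 1, R 2 1, 1] with hv
    have w0 : v 0 = R 0 0 := rfl
    have w1 : v 1 = R 1 0 := rfl
    have w2 : v 2 = R 2 0 := rfl
    have w3 : v 3 = R 0 1 := rfl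
    have w4 : v 4 = R 1 1 := rfl
    have w5 : v 5 = R 2 1 := rfl
    have w6 : v 6 = 1 := rfl
    have hvne : v ≠ 0 := by
      intro h
      have := congrFun h 6
      rw [w6] at this
      simpa using this
    have ht1 : R 0 0 * R 0 0 + R 1 0 * R 1 0 + R 2 0 * R 2 0 = 1 := by
      have := congrFun (congrFun horth 0) 0
      simpa [Matrix.mul_apply, Fin.sum_univ_three, Matrix.one_apply] using this
    have ht2 : R 0 1 * R 0 1 + R 1 1 * R 1 1 + R 2 1 * R 2 1 = 1 := by
      have := congrFun (congrFun horth 1) 1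
      simpa [Matrix.mul_apply, Fin.sum_univ_three, Matrix.one_apply] using this
    have ht3 : R 0 0 * R 0 1 + R 1 0 * R 1 1 + R 2 0 * R 2 1 = 0 := by
      have := congrFun (congrFun horth 0) 1
      simpa [Matrix.mul_apply, Fin.sum_univ_three, Matrix.one_apply] using this
    have ht4 : R 0 2 * R 0 2 + R 1 2 * R 1 2 + R 2 2 * R 2 2 = 1 := by
      have := congrFun (congrFun horth 2) 2
      simpa [Matrix.mul_apply, Fin.sum_univ_three, Matrix.one_apply] using this
    rw [Matrix.det_fin_three] at hdet
    have key : (R 1 0 * R 2 1 - R 2 0 * R 1 1 - R 0 2) ^ 2 +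
        (R 2 0 * R 0 1 - R 0 0 * R 2 1 - R 1 2) ^ 2 +
        (R 0 0 * R 1 1 - R 1 0 * R 0 1 - R 2 2) ^ 2 = 0 := by
      linear_combination (R 0 1 * R 0 1 + R 1 1 * R 1 1 + R 2 1 * R 2 1) * ht1 + ht2 -
        (R 0 0 * R 0 1 + R 1 0 * R 1 1 + R 2 0 * R 2 1) * ht3 - 2 * hdet + ht4
    have s1 : (R 1 0 * R 2 1 - R 2 0 * R 1 1 - R 0 2) ^ 2 = 0 := by
      linarith [key, sq_nonneg (R 2 0 * R 0 1 - R 0 0 * R 2 1 - R 1 2),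
        sq_nonneg (R 0 0 * R 1 1 - R 1 0 * R 0 1 - R 2 2),
        sq_nonneg (R 1 0 * R 2 1 - R 2 0 * R 1 1 - R 0 2)]
    have s2 : (R 2 0 * R 0 1 - R 0 0 * R 2 1 - R 1 2) ^ 2 = 0 := by
      linarith [key, sq_nonneg (R 2 0 * R 0 1 - R 0 0 * R 2 1 - R 1 2),
        sq_nonneg (R 0 0 * R 1 1 - R 1 0 * R 0 1 - R 2 2),
        sq_nonneg (R 1 0 * R 2 1 - R 2 0 * R 1 1 - R 0 2)]
    have s3 : (R 0 0 * R 1 1 - R 1 0 * R 0 1 - R 2 2) ^ 2 = 0 := by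
      linarith [key, sq_nonneg (R 2 0 * R 0 1 - R 0 0 * R 2 1 - R 1 2),
        sq_nonneg (R 0 0 * R 1 1 - R 1 0 * R 0 1 - R 2 2),
        sq_nonneg (R 1 0 * R 2 1 - R 2 0 * R 1 1 - R 0 2)]
    have k1 : R 0 2 = R 1 0 * R 2 1 - R 2 0 * R 1 1 := by
      have := (pow_eq_zero_iff (two_ne_zero (α := ℕ))).mp s1; linarith
    have k2 : R 1 2 = R 2 0 * R 0 1 - R 0 0 * R 2 1 := by
      have := (pow_eq_zero_iff (two_ne_zero (α := ℕ))).mp s2; linarith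
    have k3 : R 2 2 = R 0 0 * R 1 1 - R 1 0 * R 0 1 := by
      have := (pow_eq_zero_iff (two_ne_zero (α := ℕ))).mp s3; linarith
    have E : ∀ i j, vecMulVec v v i j = v i * v j := fun i j => rfl
    refine ⟨vecMulVec v v, outer_psd v, outer_rank v hvne, ?_, ?_, ?_, ?_, ?_, ?_, ?_,
      ?_, ?_, ?_, ?_, ?_, ?_⟩
    · rw [E, w6]; ring
    · rw [E, E, E, w0, w1, w2]; exact ht1
    · rw [E, E, E, w3, w4, w5]; exact ht2
    · rw [E, E, E, w0, w1, w2, w3, w4, w5]; exact ht3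
    · rw [E, w0, w6]; ring
    · rw [E, w1, w6]; ring
    · rw [E, w2, w6]; ring
    · rw [E, w3, w6]; ring
    · rw [E, w4, w6]; ring
    · rw [E, w5, w6]; ring
    · rw [E, E, w1, w5, w2, w4]; linarith [k1]
    · rw [E, E, w2, w3, w0, w5]; linarith [k2]
    · rw [E, E, w0, w4, w1, w3]; linarith [k3]
  · rintro ⟨Y, hpsd, hrank, h66, ht1, ht2, ht3, e00, e10, e20, e01, e11, e21, e02, e12, e22⟩
    have hsym : ∀ i j, Y i j = Y j i := by
      intro i j
      have := congrFun (congrFun hpsd.1 j) i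
      simpa [conjTranspose_apply] using this
    have hfac := rank_one_entries hsym h66 hrank
    rw [hfac 0 0, hfac 1 1, hfac 2 2] at ht1
    rw [hfac 3 3, hfac 4 4, hfac 5 5] at ht2
    rw [hfac 0 3, hfac 1 4, hfac 2 5] at ht3
    rw [hfac 1 5, hfac 2 4] at e02
    rw [hfac 2 3, hfac 0 5] at e12
    rw [hfac 0 4, hfac 1 3] at e22
    have hR : R = !![Y 0 6, Y 3 6, Y 1 6 * Y 5 6 - Y 2 6 * Y 4 6;
                     Y 1 6, Y 4 6, Y 2 6 * Y 3 6 - Y 0 6 * Y 5 6;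
                     Y 2 6, Y 5 6, Y 0 6 * Y 4 6 - Y 1 6 * Y 3 6] := by
      conv_lhs => rw [eta_fin_three R]
      rw [e00, e01, e02, e10, e11, e12, e20, e21, e22]
    have hRT : Rᵀ = !![Y 0 6, Y 1 6, Y 2 6;
                       Y 3 6, Y 4 6, Y 5 6;
                       Y 1 6 * Y 5 6 - Y 2 6 * Y 4 6, Y 2 6 * Y 3 6 - Y 0 6 * Y 5 6,
                         Y 0 6 * Y 4 6 - Y 1 6 * Y 3 6] := by
      conv_lhs => rw [eta_fin_three Rᵀ]
      simp only [transpose_apply]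
      rw [e00, e10, e20, e01, e11, e21, e02, e12, e22]
    constructor
    · rw [hRT, hR]
      ext i j
      fin_cases i <;> fin_cases j <;>
        simp [Matrix.mul_apply, Fin.sum_univ_three, Matrix.one_apply]
      all_goals first
        | ring1
        | linear_combination ht1
        | linear_combination -ht1
        | linear_combination ht2
        | linear_combination -ht2
        | linear_combination ht3
        | linear_combination -ht3
        | linear_combination ht3 - ht1
        | linear_combination ht3 - ht2
        | linear_combination ht1 - ht3
        | linear_combination ht2 - ht3
        | linear_combination (Y 3 6 * Y 3 6 + Y 4 6 * Y 4 6 + Y 5 6 * Y 5 6) * ht1 + ht2 -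
            (Y 0 6 * Y 3 6 + Y 1 6 * Y 4 6 + Y 2 6 * Y 5 6) * ht3
        | linear_combination (Y 0 6 * Y 3 6 + Y 1 6 * Y 4 6 + Y 2 6 * Y 5 6) * ht3 -
            (Y 3 6 * Y 3 6 + Y 4 6 * Y 4 6 + Y 5 6 * Y 5 6) * ht1 - ht2
    · rw [hR]
      simp [Matrix.det_fin_three]
      linear_combination (Y 3 6 * Y 3 6 + Y 4 6 * Y 4 6 + Y 5 6 * Y 5 6) * ht1 + ht2 -
        (Y 0 6 * Y 3 6 + Y 1 6 * Y 4 6 + Y 2 6 * Y 5 6) * ht3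
end

section
/- Let Y_τ ∈ ℝ^{8×8} be a rank-1 symmetric PSD matrix written as zzᵀ for some z ∈ ℝ⁸, partitioned as z = (a·y₁; b·y₂; c; d) with ‖y₁‖ = ‖y₂‖ = 1 and a, b ≥ 0. Suppose: (1) trace(Y_τ) = 2; (2) trace(Y_τ(1:3,1:3)) = Y_τ(7,7) and trace(Y_τ(4:6,4:6)) = Y_τ(8,8); (3) Y_τ(4:6,7) = Y_τ(1:3,8); (4) trace(Y_τ(1:3,4:6)) = Y_τ(7,8); (5) Y_τ(7,7) ∈ [0,1]; (6) Y_τ(7,8) ≥ 0. Then there exist t ∈ [0,1], a unit vector y ∈ ℝ³, and a sign s ∈ {+1,−1} such that z = (√t·y; √(1−t)·y; s√t; s√(1−t)). -/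
open Matrix

/- The diagonal constraints force `c² = a²`, `d² = b²` and hence `a² + b² = 1`; the sign condition
`cd ≥ 0` makes `(c, d) = s • (a, b)` for one sign `s`, and then constraint (3) reads
`s a b • y₂ = s a b • y₁`, so `y₁ = y₂` unless `a` or `b` vanishes, in which case the other unit
vector serves as the common direction. Take `t = a²`. -/

theorem exists_sign_eq_mul_of_sq_eq {a b c d : ℝ} (ha : 0 ≤ a) (hb : 0 ≤ b)
    (hc : c ^ 2 = a ^ 2) (hd : d ^ 2 = b ^ 2) (hcd : 0 ≤ c * d) :
    ∃ s : ℝ, (s = 1 ∨ s = -1) ∧ c = s * a ∧ d = s * b := by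
  have hca : |c| = a := by rw [← abs_of_nonneg ha]; exact sq_eq_sq_iff_abs_eq_abs c a |>.mp hc
  have hdb : |d| = b := by rw [← abs_of_nonneg hb]; exact sq_eq_sq_iff_abs_eq_abs d b |>.mp hd
  rcases mul_nonneg_iff.mp hcd with ⟨hc0, hd0⟩ | ⟨hc0, hd0⟩
  · exact ⟨1, .inl rfl, by rw [← hca, abs_of_nonneg hc0, one_mul],
      by rw [← hdb, abs_of_nonneg hd0, one_mul]⟩
  · exact ⟨-1, .inr rfl, by rw [← hca, abs_of_nonpos hc0]; ring,
      by rw [← hdb, abs_of_nonpos hd0]; ring⟩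

theorem exists_smul_eq_smul_of_mul_smul_eq {K V : Type*} [Field K] [AddCommGroup V] [Module K V]
    {a b : K} {y₁ y₂ : V} (h : (a * b) • y₁ = (a * b) • y₂) :
    ∃ y, (y = y₁ ∨ y = y₂) ∧ a • y₁ = a • y ∧ b • y₂ = b • y := by
  by_cases ha : a = 0
  · exact ⟨y₂, .inr rfl, by rw [ha, zero_smul, zero_smul], rfl⟩
  by_cases hb : b = 0
  · exact ⟨y₁, .inl rfl, rfl, by rw [hb, zero_smul, zero_smul]⟩
  have hy : y₁ = y₂ := smul_right_injective V (mul_ne_zero ha hb) h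
  exact ⟨y₁, .inl rfl, rfl, by rw [hy]⟩

theorem rank_one_prismatic_structure_general (a b c d : ℝ) (y₁ y₂ : Fin 3 → ℝ)
    (ha : 0 ≤ a) (hb : 0 ≤ b)
    (hy₁ : ∑ i, y₁ i ^ 2 = 1) (hy₂ : ∑ i, y₂ i ^ 2 = 1)
    (z : Fin 8 → ℝ)
    (hz : z = ![a * y₁ 0, a * y₁ 1, a * y₁ 2, b * y₂ 0, b * y₂ 1, b * y₂ 2, c, d])
    (Y : Matrix (Fin 8) (Fin 8) ℝ) (hYz : Y = vecMulVec z z)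
    (h1 : Y.trace = 2)
    (h2a : Y 0 0 + Y 1 1 + Y 2 2 = Y 6 6)
    (h2b : Y 3 3 + Y 4 4 + Y 5 5 = Y 7 7)
    (h3 : Y 3 6 = Y 0 7 ∧ Y 4 6 = Y 1 7 ∧ Y 5 6 = Y 2 7)
    (h6 : 0 ≤ Y 6 7) :
    ∃ t ∈ Set.Icc (0 : ℝ) 1, ∃ y : Fin 3 → ℝ, (∑ i, y i ^ 2 = 1) ∧
      ∃ s : ℝ, (s = 1 ∨ s = -1) ∧
        z = ![Real.sqrt t * y 0, Real.sqrt t * y 1, Real.sqrt t * y 2,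
              Real.sqrt (1 - t) * y 0, Real.sqrt (1 - t) * y 1,
              Real.sqrt (1 - t) * y 2,
              s * Real.sqrt t, s * Real.sqrt (1 - t)] := by
  subst hz hYz
  simp only [vecMulVec_apply, trace, diag_apply, Fin.sum_univ_eight, Fin.sum_univ_three,
    cons_val] at h1 h2a h2b h3 h6 hy₁ hy₂
  have hca : c ^ 2 = a ^ 2 := by linear_combination -h2a + a ^ 2 * hy₁
  have hdb : d ^ 2 = b ^ 2 := by linear_combination -h2b + b ^ 2 * hy₂
  have hab : a ^ 2 + b ^ 2 = 1 := by
    linear_combination (h1 - a ^ 2 * hy₁ - b ^ 2 * hy₂ - hca - hdb) / 2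
  obtain ⟨s, hs, rfl, rfl⟩ := exists_sign_eq_mul_of_sq_eq ha hb hca hdb h6
  have hdir : (a * b) • y₁ = (a * b) • y₂ := by
    have hs2 : s * s = 1 := by rcases hs with rfl | rfl <;> norm_num
    have h3' : ∀ i, b * y₂ i * (s * a) = a * y₁ i * (s * b) := by
      intro i; fin_cases i; exacts [h3.1, h3.2.1, h3.2.2]
    ext i
    simp only [Pi.smul_apply, smul_eq_mul]
    linear_combination (-s) * h3' i - a * b * (y₁ i - y₂ i) * hs2
  obtain ⟨y, hy, hay, hby⟩ := exists_smul_eq_smul_of_mul_smul_eq hdir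
  have hsa : Real.sqrt (a ^ 2) = a := Real.sqrt_sq ha
  have hsb : Real.sqrt (1 - a ^ 2) = b := by rw [← hab, add_sub_cancel_left, Real.sqrt_sq hb]
  refine ⟨a ^ 2, ⟨sq_nonneg a, by linarith [sq_nonneg b]⟩, y, ?_, s, hs, ?_⟩
  · rcases hy with rfl | rfl <;> simpa only [Fin.sum_univ_three]
  · have hay' (i : Fin 3) : a * y₁ i = a * y i := congrFun hay i
    have hby' (i : Fin 3) : b * y₂ i = b * y i := congrFun hby i
    rw [hsa, hsb]
    simp only [hay', hby']

/-- Structure of rank-1 matrices `Y_τ = z zᵀ`, `z = (a y₁; b y₂; c; d)` with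
`a, b ≥ 0` and `y₁, y₂` unit vectors, satisfying the linear constraints
(1)–(6): then `z = (√t y; √(1−t) y; s√t; s√(1−t))` for some `t ∈ [0,1]`, a unit
vector `y` and a sign `s ∈ {1, −1}`. -/
theorem rank_one_prismatic_structure (a b c d : ℝ) (y₁ y₂ : Fin 3 → ℝ)
    (ha : 0 ≤ a) (hb : 0 ≤ b)
    (hy₁ : ∑ i, y₁ i ^ 2 = 1) (hy₂ : ∑ i, y₂ i ^ 2 = 1)
    (z : Fin 8 → ℝ)
    (hz : z = ![a * y₁ 0, a * y₁ 1, a * y₁ 2, b * y₂ 0, b * y₂ 1, b * y₂ 2, c, d])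
    (Y : Matrix (Fin 8) (Fin 8) ℝ) (hYz : Y = vecMulVec z z)
    (h1 : Y.trace = 2)
    (h2a : Y 0 0 + Y 1 1 + Y 2 2 = Y 6 6)
    (h2b : Y 3 3 + Y 4 4 + Y 5 5 = Y 7 7)
    (h3 : Y 3 6 = Y 0 7 ∧ Y 4 6 = Y 1 7 ∧ Y 5 6 = Y 2 7)
    (h4 : Y 0 3 + Y 1 4 + Y 2 5 = Y 6 7)
    (h5 : Y 6 6 ∈ Set.Icc (0 : ℝ) 1)
    (h6 : 0 ≤ Y 6 7) :
    ∃ t ∈ Set.Icc (0 : ℝ) 1, ∃ y : Fin 3 → ℝ, (∑ i, y i ^ 2 = 1) ∧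
      ∃ s : ℝ, (s = 1 ∨ s = -1) ∧
        z = ![Real.sqrt t * y 0, Real.sqrt t * y 1, Real.sqrt t * y 2,
              Real.sqrt (1 - t) * y 0, Real.sqrt (1 - t) * y 1,
              Real.sqrt (1 - t) * y 2,
              s * Real.sqrt t, s * Real.sqrt (1 - t)] :=
  rank_one_prismatic_structure_general a b c d y₁ y₂ ha hb hy₁ hy₂ z hz Y hYz h1 h2a h2b h3 h6
end
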